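/- Fix a cube Λ of side L > 0, q ≥ 0, and η ≥ 0. On the open set {ρ ≥ 0 : σ(q,ρ) > 0}, the map ρ ↦ p²_Λ(q,ρ,η) is differentiable and its derivative equals −(v/V) Σ_{k∈Λ*} { (e^{β E(k,q,ρ)} − 1)^{−1} · f(k,ρ)/E(k,q,ρ) + (1/2)( f(k,ρ)/E(k,q,ρ) − 1 ) } − v η²/(f(0,ρ) − uq)² + vρ; that is, the infinite lattice sums defining p²_Λ may be differentiated term by term in ρ. -/

import Mathlib

open MeasureTheory Real Filter Topology

noncomputable section

namespace PB

abbrev Kspace (ν : ℕ) : Type := EuclideanSpace ℝ (Fin ν)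

/-- kinetic energy `ε(k) = ‖k‖²/(2m)` -/
def eps (ν : ℕ) (m : ℝ) (k : Kspace ν) : ℝ := ‖k‖ ^ 2 / (2 * m)

/-- `f(k,ρ) = ε(k) − μ + vρ` -/
def fF (ν : ℕ) (m μ v : ℝ) (k : Kspace ν) (ρ : ℝ) : ℝ := eps ν m k - μ + v * ρ

/-- `E(k,q,ρ) = (f(k,ρ)² − u²q²|λ(k)|²)^{1/2}` -/
def eE (ν : ℕ) (m μ v u : ℝ) (lam : Kspace ν → ℂ) (k : Kspace ν) (q ρ : ℝ) : ℝ :=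
  Real.sqrt (fF ν m μ v k ρ ^ 2 - u ^ 2 * q ^ 2 * ‖lam k‖ ^ 2)

/-- `σ(q,ρ) = vρ − μ − |u|q` -/
def sigma0 (μ v u q ρ : ℝ) : ℝ := v * ρ - μ - |u| * q

/-- The point `(2π/L)·z` of the dual lattice `Λ* = (2π/L)ℤ^ν`. -/
def latticePt (ν : ℕ) (L : ℝ) (z : Fin ν → ℤ) : Kspace ν :=
  (WithLp.equiv 2 (Fin ν → ℝ)).symm fun i => (2 * π / L) * (z i : ℝ)

/-- integrand of the limiting approximating pressure -/
def p2Int (ν : ℕ) (m μ v u β : ℝ) (lam : Kspace ν → ℂ) (q ρ : ℝ) (k : Kspace ν) : ℝ :=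
  -β⁻¹ * Real.log (1 - Real.exp (-β * eE ν m μ v u lam k q ρ))
    - (eE ν m μ v u lam k q ρ - fF ν m μ v k ρ) / 2

/-- `p²(q,ρ)`, the limiting approximating pressure -/
def p2 (ν : ℕ) (m μ v u β : ℝ) (lam : Kspace ν → ℂ) (q ρ : ℝ) : ℝ :=
  (∫ k : Kspace ν, ((2 * π) ^ ν)⁻¹ * p2Int ν m μ v u β lam q ρ k)
    - u / 2 * q ^ 2 + v / 2 * ρ ^ 2

/-- `p²(q,ρ,η) = p²(q,ρ) + η²/(f(0,ρ) − uq)` -/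
def p2eta (ν : ℕ) (m μ v u β : ℝ) (lam : Kspace ν → ℂ) (q ρ η : ℝ) : ℝ :=
  p2 ν m μ v u β lam q ρ + η ^ 2 / (fF ν m μ v 0 ρ - u * q)

/-- `p²_Λ(q,ρ)`, the finite-volume approximating pressure (cube of side `L`, `V = L^ν`) -/
def p2L (ν : ℕ) (m μ v u β L : ℝ) (lam : Kspace ν → ℂ) (q ρ : ℝ) : ℝ :=
  -(β * L ^ ν)⁻¹ *
      (∑' z : Fin ν → ℤ,
        Real.log (1 - Real.exp (-β * eE ν m μ v u lam (latticePt ν L z) q ρ)))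
    - (2 * L ^ ν)⁻¹ *
      (∑' z : Fin ν → ℤ,
        (eE ν m μ v u lam (latticePt ν L z) q ρ - fF ν m μ v (latticePt ν L z) ρ))
    - u / 2 * q ^ 2 + v / 2 * ρ ^ 2

/-- `p²_Λ(q,ρ,η) = p²_Λ(q,ρ) + η²/(f(0,ρ) − uq)` -/
def p2Leta (ν : ℕ) (m μ v u β L : ℝ) (lam : Kspace ν → ℂ) (q ρ η : ℝ) : ℝ :=
  p2L ν m μ v u β L lam q ρ + η ^ 2 / (fF ν m μ v 0 ρ - u * q)

/-!
Fix `ρ₀` with `σ(q,ρ₀) > 0` and put `s := σ(q,ρ₀)/2`. On the interval `|ρ - ρ₀| < s/v` we have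
`σ(q,ρ) ≥ s`, and since `|λ| ≤ 1` the radicand of `E` dominates `(f - |u|q)² = (ε + σ)²`, so
`E(k,q,ρ) ≥ ε(k) + s` for every mode. Hence the logarithm and the Bose factor `(e^{βE} - 1)⁻¹`
are bounded by a multiple of the Gaussian `e^{-βε(k)}`, while `f - E` and `f/E - 1` are bounded by
a multiple of `|λ(k)|`, uniformly on the interval. Both bounds are summable over `Λ*` by the
`p`-series estimate for lattices (`|λ(k)|` decays faster than `‖k‖^{-ν}`), so the series defining
`p²_Λ` may be differentiated term by term.
-/

theorem summable_norm_sum_intCast_smul_rpow {E ι : Type*} [NormedAddCommGroup E] [NormedSpace ℝ E]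
    [FiniteDimensional ℝ E] [Fintype ι] (b : Module.Basis ι ℝ E) {r : ℝ}
    (hr : r < -Fintype.card ι) :
    Summable fun z : ι → ℤ => ‖∑ i, (z i : ℝ) • b i‖ ^ r := by
  have hrank : Module.finrank ℤ (Submodule.span ℤ (Set.range b)) = Fintype.card ι :=
    Module.finrank_eq_card_basis (b.restrictScalars ℤ)
  refine ((ZLattice.summable_norm_rpow _ r (hrank ▸ hr)).comp_injective
    (b.restrictScalars ℤ).equivFun.symm.injective).congr fun z => ?_
  simp [Module.Basis.equivFun_symm_apply, Int.cast_smul_eq_zsmul]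

theorem exp_neg_le_factorial_div_pow {x : ℝ} (hx : 0 < x) (n : ℕ) :
    exp (-x) ≤ n.factorial / x ^ n := by
  rw [exp_neg, ← inv_div]
  exact inv_anti₀ (by positivity) (pow_div_factorial_le_exp x hx.le n)

theorem one_sub_exp_neg_pos {y : ℝ} (hy : 0 < y) : 0 < 1 - exp (-y) :=
  sub_pos.2 (exp_lt_one_iff.2 (neg_lt_zero.2 hy))

theorem hasDerivAt_log_one_sub_exp_neg {y : ℝ} (hy : 0 < y) :
    HasDerivAt (fun y => log (1 - exp (-y))) (exp y - 1)⁻¹ y := by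
  have h1 : 1 - exp (-y) ≠ 0 := (one_sub_exp_neg_pos hy).ne'
  convert ((hasDerivAt_neg y).exp.const_sub 1).log h1 using 1
  have h2 : exp y - 1 ≠ 0 := (sub_pos.2 (one_lt_exp_iff.2 hy)).ne'
  rw [exp_neg] at h1 ⊢
  field_simp

theorem abs_log_one_sub_exp_neg_le {y : ℝ} (hy : 0 < y) :
    |log (1 - exp (-y))| ≤ (exp y - 1)⁻¹ := by
  have h0 : 0 < 1 - exp (-y) := one_sub_exp_neg_pos hy
  have h1 : exp y - 1 ≠ 0 := (sub_pos.2 (one_lt_exp_iff.2 hy)).ne'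
  rw [abs_of_nonpos (log_nonpos h0.le (by linarith [exp_pos (-y)])), ← log_inv]
  refine (log_le_sub_one_of_pos (inv_pos.2 h0)).trans (le_of_eq ?_)
  rw [exp_neg] at h0 ⊢
  field_simp
  ring

theorem inv_exp_sub_one_le_of_le {y₀ y : ℝ} (hy₀ : 0 < y₀) (hy : y₀ ≤ y) :
    (exp y - 1)⁻¹ ≤ exp (-y) / (1 - exp (-y₀)) := by
  have h0 : 0 < 1 - exp (-y₀) := one_sub_exp_neg_pos hy₀
  have h1 : exp y * (1 - exp (-y₀)) ≤ exp y - 1 := by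
    rw [mul_sub, mul_one, ← exp_add]
    linarith [one_le_exp (show 0 ≤ y + -y₀ by linarith)]
  rw [exp_neg, div_eq_mul_inv, ← mul_inv]
  exact inv_anti₀ (by positivity) h1

def dualLatticeBasis (ν : ℕ) {L : ℝ} (hL : L ≠ 0) : Module.Basis (Fin ν) ℝ (Kspace ν) :=
  (EuclideanSpace.basisFun (Fin ν) ℝ).toBasis.isUnitSMul
    (w := fun _ => 2 * π / L) fun _ => (by positivity : 2 * π / L ≠ 0).isUnit

theorem latticePt_eq_sum {ν : ℕ} {L : ℝ} (hL : L ≠ 0) (z : Fin ν → ℤ) :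
    latticePt ν L z = ∑ i, (z i : ℝ) • dualLatticeBasis ν hL i := by
  ext j
  simp [latticePt, dualLatticeBasis, Module.Basis.isUnitSMul_apply, Pi.single_apply, mul_comm]

theorem latticePt_eq_zero_iff {ν : ℕ} {L : ℝ} (hL : L ≠ 0) {z : Fin ν → ℤ} :
    latticePt ν L z = 0 ↔ z = 0 := by
  have h2πL : 2 * π / L ≠ 0 := by positivity
  simp [latticePt, funext_iff, h2πL]

theorem summable_comp_latticePt_of_norm_le_rpow {ν : ℕ} {L : ℝ} (hL : L ≠ 0) {r C : ℝ}
    (hr : r < -ν) {g : Kspace ν → ℝ} (hg : ∀ k ≠ 0, ‖g k‖ ≤ C * ‖k‖ ^ r) :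
    Summable fun z : Fin ν → ℤ => g (latticePt ν L z) := by
  have hsum : Summable fun z : Fin ν → ℤ => ‖latticePt ν L z‖ ^ r := by
    simp_rw [latticePt_eq_sum hL]
    exact summable_norm_sum_intCast_smul_rpow _ (by simpa using hr)
  refine .of_norm_bounded_eventually (hsum.mul_left C) ?_
  filter_upwards [eventually_cofinite_ne 0] with z hz
  exact hg _ ((latticePt_eq_zero_iff hL).not.2 hz)

theorem summable_exp_neg_mul_eps_latticePt {ν : ℕ} {m β L : ℝ} (hm : 0 < m) (hβ : 0 < β)
    (hL : L ≠ 0) : Summable fun z : Fin ν → ℤ => exp (-β * eps ν m (latticePt ν L z)) := by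
  set n := ν + 1
  refine summable_comp_latticePt_of_norm_le_rpow hL (g := fun k => exp (-β * eps ν m k))
    (r := -((2 * n : ℕ) : ℝ))
    (C := n.factorial / (β / (2 * m)) ^ n) (by push_cast [n]; linarith) ?_
  intro k hk
  have hx : 0 < β / (2 * m) * ‖k‖ ^ 2 := by positivity
  rw [Real.norm_of_nonneg (exp_pos _).le, Real.rpow_neg (norm_nonneg k), Real.rpow_natCast,
    pow_mul, ← div_eq_mul_inv, div_div, ← mul_pow]
  convert exp_neg_le_factorial_div_pow hx n using 2
  rw [eps]; ring

theorem summable_norm_comp_latticePt_of_le_div {ν : ℕ} {L c p : ℝ} (hL : L ≠ 0) (hp : ν < p)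
    {g : Kspace ν → ℂ} (hg : ∀ k, ‖g k‖ ≤ c / (1 + ‖k‖ ^ p)) :
    Summable fun z : Fin ν → ℤ => ‖g (latticePt ν L z)‖ := by
  refine summable_comp_latticePt_of_norm_le_rpow hL (g := fun k => ‖g k‖) (r := -p) (C := c)
    (by linarith) ?_
  intro k hk
  have hkp : 0 < ‖k‖ ^ p := Real.rpow_pos_of_pos (norm_pos_iff.2 hk) p
  have hc : 0 ≤ c := by
    simpa using (le_div_iff₀ (by positivity : (0 : ℝ) < 1 + ‖k‖ ^ p)).1
      ((norm_nonneg _).trans (hg k))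
  rw [norm_norm, Real.rpow_neg (norm_nonneg k), ← div_eq_mul_inv]
  exact (hg k).trans (div_le_div_of_nonneg_left hc hkp (le_add_of_nonneg_left zero_le_one))

section Mode

variable {ν : ℕ} {m μ v u β q ρ s : ℝ} {lam : Kspace ν → ℂ} {k : Kspace ν}

theorem eps_nonneg (hm : 0 ≤ m) : 0 ≤ eps ν m k := by unfold eps; positivity

theorem fF_eq_eps_add_sigma0 :
    fF ν m μ v k ρ = eps ν m k + sigma0 μ v u q ρ + |u| * q := by
  unfold fF sigma0; ring

theorem sigma0_sub_lt_of_sub_div_lt {ρ₀ : ℝ} (hv : 0 < v) (hρ : ρ₀ - s / v < ρ) :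
    sigma0 μ v u q ρ₀ - s < sigma0 μ v u q ρ := by
  have := mul_lt_mul_of_pos_left hρ hv
  rw [mul_sub, mul_div_cancel₀ _ hv.ne'] at this
  unfold sigma0
  linarith

theorem mul_lt_fF (hm : 0 ≤ m) (hq : 0 ≤ q) (hσ : 0 < sigma0 μ v u q ρ) :
    u * q < fF ν m μ v k ρ := by
  rw [fF_eq_eps_add_sigma0 (u := u) (q := q)]
  linarith [eps_nonneg (ν := ν) (k := k) hm, mul_le_mul_of_nonneg_right (le_abs_self u) hq]

theorem hasDerivAt_fF : HasDerivAt (fun ρ => fF ν m μ v k ρ) v ρ := by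
  simpa [fF] using ((hasDerivAt_id ρ).const_mul v).const_add (eps ν m k - μ)

theorem sq_fF_sub_le_radicand (hm : 0 ≤ m) (hq : 0 ≤ q) (hlam : ‖lam k‖ ≤ 1)
    (hσ : 0 ≤ sigma0 μ v u q ρ) :
    (fF ν m μ v k ρ - |u| * q) ^ 2 ≤ fF ν m μ v k ρ ^ 2 - u ^ 2 * q ^ 2 * ‖lam k‖ ^ 2 := by
  have hF : |u| * q ≤ fF ν m μ v k ρ := by
    rw [fF_eq_eps_add_sigma0 (u := u) (q := q)]; linarith [eps_nonneg (k := k) hm]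
  have hw : u ^ 2 * q ^ 2 * ‖lam k‖ ^ 2 ≤ (|u| * q) ^ 2 := by
    rw [mul_pow, sq_abs, ← mul_pow u q]
    exact mul_le_of_le_one_right (sq_nonneg _) (pow_le_one₀ (norm_nonneg _) hlam)
  nlinarith [mul_nonneg (abs_nonneg u) hq]

theorem eps_add_sigma0_le_eE (hm : 0 ≤ m) (hq : 0 ≤ q) (hlam : ‖lam k‖ ≤ 1)
    (hσ : 0 ≤ sigma0 μ v u q ρ) :
    eps ν m k + sigma0 μ v u q ρ ≤ eE ν m μ v u lam k q ρ := by
  have h : eps ν m k + sigma0 μ v u q ρ = fF ν m μ v k ρ - |u| * q := by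
    rw [fF_eq_eps_add_sigma0 (u := u) (q := q)]; ring
  rw [h]
  exact Real.le_sqrt_of_sq_le (sq_fF_sub_le_radicand hm hq hlam hσ)

theorem eE_pos (hm : 0 ≤ m) (hq : 0 ≤ q) (hlam : ‖lam k‖ ≤ 1) (hσ : 0 < sigma0 μ v u q ρ) :
    0 < eE ν m μ v u lam k q ρ :=
  (add_pos_of_nonneg_of_pos (eps_nonneg hm) hσ).trans_le (eps_add_sigma0_le_eE hm hq hlam hσ.le)

theorem sq_eE (hm : 0 ≤ m) (hq : 0 ≤ q) (hlam : ‖lam k‖ ≤ 1) (hσ : 0 ≤ sigma0 μ v u q ρ) :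
    eE ν m μ v u lam k q ρ ^ 2 = fF ν m μ v k ρ ^ 2 - u ^ 2 * q ^ 2 * ‖lam k‖ ^ 2 :=
  Real.sq_sqrt ((sq_nonneg _).trans (sq_fF_sub_le_radicand hm hq hlam hσ))

theorem eE_le_fF (hm : 0 ≤ m) (hq : 0 ≤ q) (hσ : 0 ≤ sigma0 μ v u q ρ) :
    eE ν m μ v u lam k q ρ ≤ fF ν m μ v k ρ := by
  have hF : 0 ≤ fF ν m μ v k ρ := by
    rw [fF_eq_eps_add_sigma0 (u := u) (q := q)]
    have := eps_nonneg (k := k) hm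
    positivity
  exact (Real.sqrt_le_left hF).2 (sub_le_self _ (by positivity))

theorem hasDerivAt_eE (hm : 0 ≤ m) (hq : 0 ≤ q) (hlam : ‖lam k‖ ≤ 1) (hσ : 0 < sigma0 μ v u q ρ) :
    HasDerivAt (fun ρ => eE ν m μ v u lam k q ρ)
      (v * fF ν m μ v k ρ / eE ν m μ v u lam k q ρ) ρ := by
  have hE := eE_pos hm hq hlam hσ
  have hrad : fF ν m μ v k ρ ^ 2 - u ^ 2 * q ^ 2 * ‖lam k‖ ^ 2 ≠ 0 := by
    rw [← sq_eE hm hq hlam hσ.le]; positivity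
  refine (((hasDerivAt_fF.fun_pow 2).sub_const _).sqrt hrad).congr_deriv ?_
  rw [show √(fF ν m μ v k ρ ^ 2 - u ^ 2 * q ^ 2 * ‖lam k‖ ^ 2) = eE ν m μ v u lam k q ρ from rfl]
  field_simp
  ring

theorem hasDerivAt_p2Int (hβ : 0 < β) (hm : 0 ≤ m) (hq : 0 ≤ q) (hlam : ‖lam k‖ ≤ 1)
    (hσ : 0 < sigma0 μ v u q ρ) :
    HasDerivAt (fun ρ => p2Int ν m μ v u β lam q ρ k)
      (-(v * ((exp (β * eE ν m μ v u lam k q ρ) - 1)⁻¹ *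
          (fF ν m μ v k ρ / eE ν m μ v u lam k q ρ)
        + 1 / 2 * (fF ν m μ v k ρ / eE ν m μ v u lam k q ρ - 1)))) ρ := by
  have hE := hasDerivAt_eE hm hq hlam hσ
  have hlog : HasDerivAt (fun ρ => log (1 - exp (-β * eE ν m μ v u lam k q ρ)))
      ((exp (β * eE ν m μ v u lam k q ρ) - 1)⁻¹ *
        (β * (v * fF ν m μ v k ρ / eE ν m μ v u lam k q ρ))) ρ := by
    simpa only [neg_mul, Function.comp_def] using
      (hasDerivAt_log_one_sub_exp_neg (mul_pos hβ (eE_pos hm hq hlam hσ))).comp ρ (hE.const_mul β)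
  refine ((hlog.const_mul (-β⁻¹)).sub ((hE.sub hasDerivAt_fF).div_const 2)).congr_deriv ?_
  field_simp
  ring

theorem eps_add_le_eE (hm : 0 ≤ m) (hq : 0 ≤ q) (hlam : ‖lam k‖ ≤ 1)
    (hs : 0 ≤ s) (hsσ : s ≤ sigma0 μ v u q ρ) :
    eps ν m k + s ≤ eE ν m μ v u lam k q ρ := by
  linarith [eps_add_sigma0_le_eE hm hq hlam (hs.trans hsσ)]

theorem inv_exp_mul_eE_sub_one_le (hβ : 0 < β) (hm : 0 ≤ m) (hq : 0 ≤ q) (hlam : ‖lam k‖ ≤ 1)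
    (hs : 0 < s) (hsσ : s ≤ sigma0 μ v u q ρ) :
    (exp (β * eE ν m μ v u lam k q ρ) - 1)⁻¹ ≤ exp (-β * eps ν m k) / (1 - exp (-(β * s))) := by
  have hE := eps_add_le_eE hm hq hlam hs.le hsσ
  have hεs := eps_nonneg (k := k) hm
  refine (inv_exp_sub_one_le_of_le (mul_pos hβ hs) (by nlinarith)).trans ?_
  gcongr
  · exact (one_sub_exp_neg_pos (mul_pos hβ hs)).le
  · nlinarith

theorem abs_log_one_sub_exp_eE_le (hβ : 0 < β) (hm : 0 ≤ m) (hq : 0 ≤ q)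
    (hlam : ‖lam k‖ ≤ 1) (hs : 0 < s) (hsσ : s ≤ sigma0 μ v u q ρ) :
    |log (1 - exp (-β * eE ν m μ v u lam k q ρ))| ≤
      exp (-β * eps ν m k) / (1 - exp (-(β * s))) := by
  have hE := eps_add_le_eE hm hq hlam hs.le hsσ
  have hεs := eps_nonneg (k := k) hm
  rw [neg_mul]
  exact (abs_log_one_sub_exp_neg_le (by nlinarith)).trans
    (inv_exp_mul_eE_sub_one_le hβ hm hq hlam hs hsσ)

theorem fF_sub_eE_le (hm : 0 ≤ m) (hq : 0 ≤ q) (hlam : ‖lam k‖ ≤ 1)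
    (hs : 0 < s) (hsσ : s ≤ sigma0 μ v u q ρ) :
    fF ν m μ v k ρ - eE ν m μ v u lam k q ρ ≤ u ^ 2 * q ^ 2 / s * ‖lam k‖ := by
  have hσ := hs.le.trans hsσ
  have hE := eps_add_le_eE hm hq hlam hs.le hsσ
  have hεs := eps_nonneg (k := k) hm
  have hEF := eE_le_fF (lam := lam) (k := k) hm hq hσ
  have hsq := sq_eE hm hq hlam hσ
  have hlam2 : ‖lam k‖ ^ 2 ≤ ‖lam k‖ := pow_le_of_le_one (norm_nonneg _) hlam two_ne_zero
  rw [div_mul_eq_mul_div, le_div_iff₀ hs]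
  nlinarith [mul_le_mul_of_nonneg_left hlam2 (by positivity : (0 : ℝ) ≤ u ^ 2 * q ^ 2)]

theorem abs_eE_sub_fF_le (hm : 0 ≤ m) (hq : 0 ≤ q) (hlam : ‖lam k‖ ≤ 1)
    (hs : 0 < s) (hsσ : s ≤ sigma0 μ v u q ρ) :
    |eE ν m μ v u lam k q ρ - fF ν m μ v k ρ| ≤ u ^ 2 * q ^ 2 / s * ‖lam k‖ := by
  rw [abs_sub_comm, abs_of_nonneg (sub_nonneg.2 (eE_le_fF hm hq (hs.le.trans hsσ)))]
  exact fF_sub_eE_le hm hq hlam hs hsσ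

theorem fF_div_eE_le (hm : 0 ≤ m) (hq : 0 ≤ q) (hlam : ‖lam k‖ ≤ 1)
    (hs : 0 < s) (hsσ : s ≤ sigma0 μ v u q ρ) :
    fF ν m μ v k ρ / eE ν m μ v u lam k q ρ ≤ 1 + |u| * q / s := by
  have hE := eps_add_le_eE hm hq hlam hs.le hsσ
  have hεs := eps_nonneg (k := k) hm
  have hF : fF ν m μ v k ρ ≤ eE ν m μ v u lam k q ρ + |u| * q := by
    linarith [eps_add_sigma0_le_eE hm hq hlam (hs.le.trans hsσ),
      fF_eq_eps_add_sigma0 (ν := ν) (m := m) (μ := μ) (v := v) (k := k) (u := u) (q := q) (ρ := ρ)]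
  have hsE : |u| * q ≤ |u| * q / s * eE ν m μ v u lam k q ρ := by
    rw [div_mul_eq_mul_div, le_div_iff₀ hs]
    exact mul_le_mul_of_nonneg_left (by linarith) (by positivity)
  rw [div_le_iff₀ (by linarith)]
  linarith

theorem abs_deriv_p2Int_le (hβ : 0 < β) (hv : 0 ≤ v) (hm : 0 ≤ m) (hq : 0 ≤ q)
    (hlam : ‖lam k‖ ≤ 1) (hs : 0 < s) (hsσ : s ≤ sigma0 μ v u q ρ) :
    |-(v * ((exp (β * eE ν m μ v u lam k q ρ) - 1)⁻¹ *
          (fF ν m μ v k ρ / eE ν m μ v u lam k q ρ)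
        + 1 / 2 * (fF ν m μ v k ρ / eE ν m μ v u lam k q ρ - 1)))| ≤
      v * ((1 + |u| * q / s) / (1 - exp (-(β * s))) * exp (-β * eps ν m k)
        + u ^ 2 * q ^ 2 / (2 * s ^ 2) * ‖lam k‖) := by
  have hE := eps_add_le_eE hm hq hlam hs.le hsσ
  have hEpos : 0 < eE ν m μ v u lam k q ρ := by linarith [eps_nonneg (k := k) hm]
  have hEF := eE_le_fF (lam := lam) (k := k) hm hq (hs.le.trans hsσ)
  have hbose : 0 ≤ (exp (β * eE ν m μ v u lam k q ρ) - 1)⁻¹ :=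
    inv_nonneg.2 (sub_nonneg.2 (one_le_exp (by positivity)))
  have hratio : 1 ≤ fF ν m μ v k ρ / eE ν m μ v u lam k q ρ := (one_le_div hEpos).2 hEF
  have hratio' : fF ν m μ v k ρ / eE ν m μ v u lam k q ρ - 1 ≤
      u ^ 2 * q ^ 2 / s ^ 2 * ‖lam k‖ := by
    rw [div_sub_one hEpos.ne', div_le_iff₀ hEpos]
    calc fF ν m μ v k ρ - eE ν m μ v u lam k q ρ ≤ u ^ 2 * q ^ 2 / s * ‖lam k‖ :=
          fF_sub_eE_le hm hq hlam hs hsσ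
      _ = u ^ 2 * q ^ 2 / s ^ 2 * ‖lam k‖ * s := by field_simp
      _ ≤ u ^ 2 * q ^ 2 / s ^ 2 * ‖lam k‖ * eE ν m μ v u lam k q ρ :=
          mul_le_mul_of_nonneg_left (by linarith [eps_nonneg (k := k) hm]) (by positivity)
  have hbose_mul : (exp (β * eE ν m μ v u lam k q ρ) - 1)⁻¹ *
      (fF ν m μ v k ρ / eE ν m μ v u lam k q ρ) ≤
        (1 + |u| * q / s) / (1 - exp (-(β * s))) * exp (-β * eps ν m k) := by
    calc _ ≤ exp (-β * eps ν m k) / (1 - exp (-(β * s))) * (1 + |u| * q / s) :=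
          mul_le_mul (inv_exp_mul_eE_sub_one_le hβ hm hq hlam hs hsσ)
            (fF_div_eE_le hm hq hlam hs hsσ) (by linarith)
            (div_nonneg (exp_pos _).le (one_sub_exp_neg_pos (mul_pos hβ hs)).le)
      _ = _ := by ring
  have hhalf : u ^ 2 * q ^ 2 / (2 * s ^ 2) * ‖lam k‖ =
      1 / 2 * (u ^ 2 * q ^ 2 / s ^ 2 * ‖lam k‖) := by
    ring
  rw [abs_neg, abs_of_nonneg (by positivity), hhalf]
  exact mul_le_mul_of_nonneg_left (by linarith) hv

end Mode

section Lattice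

variable {ν : ℕ} {m μ v u β L q ρ s : ℝ} {lam : Kspace ν → ℂ}

theorem p2L_eq_tsum_p2Int
    (hlog : Summable fun z : Fin ν → ℤ =>
      log (1 - exp (-β * eE ν m μ v u lam (latticePt ν L z) q ρ)))
    (hsub : Summable fun z : Fin ν → ℤ =>
      eE ν m μ v u lam (latticePt ν L z) q ρ - fF ν m μ v (latticePt ν L z) ρ) :
    p2L ν m μ v u β L lam q ρ =
      (L ^ ν)⁻¹ * ∑' z, p2Int ν m μ v u β lam q ρ (latticePt ν L z)
        - u / 2 * q ^ 2 + v / 2 * ρ ^ 2 := by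
  simp only [p2L, p2Int]
  rw [(hlog.mul_left _).tsum_sub (hsub.div_const 2), tsum_mul_left, tsum_div_const]
  ring

theorem summable_log_one_sub_exp_eE_latticePt (hβ : 0 < β) (hm : 0 ≤ m) (hq : 0 ≤ q)
    (hlam : ∀ k, ‖lam k‖ ≤ 1) (hs : 0 < s) (hsσ : s ≤ sigma0 μ v u q ρ)
    (hG : Summable fun z : Fin ν → ℤ => exp (-β * eps ν m (latticePt ν L z))) :
    Summable fun z : Fin ν → ℤ =>
      log (1 - exp (-β * eE ν m μ v u lam (latticePt ν L z) q ρ)) :=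
  .of_norm_bounded (hG.div_const _) fun _ =>
    abs_log_one_sub_exp_eE_le hβ hm hq (hlam _) hs hsσ

theorem summable_eE_sub_fF_latticePt (hm : 0 ≤ m) (hq : 0 ≤ q)
    (hlam : ∀ k, ‖lam k‖ ≤ 1) (hs : 0 < s) (hsσ : s ≤ sigma0 μ v u q ρ)
    (hΛ : Summable fun z : Fin ν → ℤ => ‖lam (latticePt ν L z)‖) :
    Summable fun z : Fin ν → ℤ =>
      eE ν m μ v u lam (latticePt ν L z) q ρ - fF ν m μ v (latticePt ν L z) ρ :=
  .of_norm_bounded (hΛ.mul_left _) fun _ => abs_eE_sub_fF_le hm hq (hlam _) hs hsσ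

theorem hasDerivAt_p2L {t : Set ℝ} {ρ₀ : ℝ} (hβ : 0 < β) (hv : 0 ≤ v) (hm : 0 ≤ m)
    (hq : 0 ≤ q) (hlam : ∀ k, ‖lam k‖ ≤ 1) (hs : 0 < s)
    (hG : Summable fun z : Fin ν → ℤ => exp (-β * eps ν m (latticePt ν L z)))
    (hΛ : Summable fun z : Fin ν → ℤ => ‖lam (latticePt ν L z)‖)
    (ht : IsOpen t) (ht' : IsPreconnected t) (hρ₀ : ρ₀ ∈ t)
    (hsσ : ∀ ρ ∈ t, s ≤ sigma0 μ v u q ρ) :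
    HasDerivAt (fun ρ => p2L ν m μ v u β L lam q ρ)
      (-(v / L ^ ν) * (∑' z : Fin ν → ℤ,
          ((exp (β * eE ν m μ v u lam (latticePt ν L z) q ρ₀) - 1)⁻¹ *
              (fF ν m μ v (latticePt ν L z) ρ₀ / eE ν m μ v u lam (latticePt ν L z) q ρ₀)
            + 1 / 2 *
              (fF ν m μ v (latticePt ν L z) ρ₀ / eE ν m μ v u lam (latticePt ν L z) q ρ₀ - 1)))
        + v * ρ₀) ρ₀ := by
  have hsum := hasDerivAt_tsum_of_isPreconnected
    (((hG.mul_left _).add (hΛ.mul_left _)).mul_left v) ht ht'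
    (fun z ρ hρ => hasDerivAt_p2Int hβ hm hq (hlam _) (hs.trans_le (hsσ ρ hρ)))
    (fun z ρ hρ => abs_deriv_p2Int_le hβ hv hm hq (hlam _) hs (hsσ ρ hρ)) hρ₀
    (((summable_log_one_sub_exp_eE_latticePt hβ hm hq hlam hs (hsσ ρ₀ hρ₀) hG).mul_left _).sub
      ((summable_eE_sub_fF_latticePt hm hq hlam hs (hsσ ρ₀ hρ₀) hΛ).div_const 2)) hρ₀
  have heq : (fun ρ => p2L ν m μ v u β L lam q ρ) =ᶠ[𝓝 ρ₀] fun ρ =>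
      (L ^ ν)⁻¹ * ∑' z, p2Int ν m μ v u β lam q ρ (latticePt ν L z)
        - u / 2 * q ^ 2 + v / 2 * ρ ^ 2 :=
    eventually_of_mem (ht.mem_nhds hρ₀) fun ρ hρ => p2L_eq_tsum_p2Int
      (summable_log_one_sub_exp_eE_latticePt hβ hm hq hlam hs (hsσ ρ hρ) hG)
      (summable_eE_sub_fF_latticePt hm hq hlam hs (hsσ ρ hρ) hΛ)
  refine HasDerivAt.congr_of_eventuallyEq ?_ heq
  refine (((hsum.const_mul (L ^ ν)⁻¹).sub_const _).add
    ((hasDerivAt_pow 2 ρ₀).const_mul (v / 2))).congr_deriv ?_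
  rw [tsum_neg, tsum_mul_left]
  ring

end Lattice

theorem statement8_general
    (ν : ℕ) (m β μ u v : ℝ) (hm : 0 < m) (hβ : 0 < β)
    (hv : 0 < v)
    (lam : Kspace ν → ℂ)
    (hlam1 : ∀ k, ‖lam k‖ ≤ 1)
    (c δ : ℝ) (hδ : 0 < δ)
    (hdec : ∀ k : Kspace ν, ‖lam k‖ ≤ c / (1 + ‖k‖ ^ (max (ν : ℝ) ((ν : ℝ) / 2 + 1) + δ)))
    (L : ℝ) (hL : 0 < L) (q : ℝ) (hq : 0 ≤ q) (η : ℝ) :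
    ∀ ρ : ℝ, 0 ≤ ρ → 0 < sigma0 μ v u q ρ →
      HasDerivAt (fun r : ℝ => p2Leta ν m μ v u β L lam q r η)
        (-(v / L ^ ν) * (∑' z : Fin ν → ℤ,
            ((Real.exp (β * eE ν m μ v u lam (latticePt ν L z) q ρ) - 1)⁻¹ *
                (fF ν m μ v (latticePt ν L z) ρ / eE ν m μ v u lam (latticePt ν L z) q ρ)
              + (1 / 2) *
                (fF ν m μ v (latticePt ν L z) ρ / eE ν m μ v u lam (latticePt ν L z) q ρ - 1)))
          - v * η ^ 2 / (fF ν m μ v 0 ρ - u * q) ^ 2 + v * ρ) ρ := by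
  intro ρ₀ _ hσ₀
  set s := sigma0 μ v u q ρ₀ / 2 with hs_def
  have hs : 0 < s := half_pos hσ₀
  have hsσ : ∀ ρ ∈ Set.Ioo (ρ₀ - s / v) (ρ₀ + s / v), s ≤ sigma0 μ v u q ρ := fun ρ hρ => by
    linarith [sigma0_sub_lt_of_sub_div_lt (μ := μ) (u := u) (q := q) hv hρ.1]
  have hρ₀ : ρ₀ ∈ Set.Ioo (ρ₀ - s / v) (ρ₀ + s / v) := by
    constructor <;> linarith [div_pos hs hv]
  have hp2L := hasDerivAt_p2L hβ hv.le hm.le hq hlam1 hs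
    (summable_exp_neg_mul_eps_latticePt hm hβ hL.ne')
    (summable_norm_comp_latticePt_of_le_div hL.ne'
      (by linarith [le_max_left (ν : ℝ) (ν / 2 + 1)]) hdec)
    isOpen_Ioo isPreconnected_Ioo hρ₀ hsσ
  have hden := mul_lt_fF (ν := ν) (μ := μ) (k := 0) hm.le hq hσ₀
  refine (hp2L.add ((hasDerivAt_const ρ₀ (η ^ 2)).div (hasDerivAt_fF.sub_const (u * q))
    (sub_pos.2 hden).ne')).congr_deriv ?_
  ring

theorem statement8
    (ν : ℕ) (hν : 1 ≤ ν) (m β μ u v : ℝ) (hm : 0 < m) (hβ : 0 < β)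
    (hv : 0 < v) (hvu : 0 < v - u)
    (lam : Kspace ν → ℂ) (hmeas : Measurable lam) (hlam0 : lam 0 = 1)
    (hlam1 : ∀ k, ‖lam k‖ ≤ 1)
    (c δ : ℝ) (hδ : 0 < δ)
    (hdec : ∀ k : Kspace ν, ‖lam k‖ ≤ c / (1 + ‖k‖ ^ (max (ν : ℝ) ((ν : ℝ) / 2 + 1) + δ)))
    (L : ℝ) (hL : 0 < L) (q : ℝ) (hq : 0 ≤ q) (η : ℝ) (hη : 0 ≤ η) :
    ∀ ρ : ℝ, 0 ≤ ρ → 0 < sigma0 μ v u q ρ →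
      HasDerivAt (fun r : ℝ => p2Leta ν m μ v u β L lam q r η)
        (-(v / L ^ ν) * (∑' z : Fin ν → ℤ,
            ((Real.exp (β * eE ν m μ v u lam (latticePt ν L z) q ρ) - 1)⁻¹ *
                (fF ν m μ v (latticePt ν L z) ρ / eE ν m μ v u lam (latticePt ν L z) q ρ)
              + (1 / 2) *
                (fF ν m μ v (latticePt ν L z) ρ / eE ν m μ v u lam (latticePt ν L z) q ρ - 1)))
          - v * η ^ 2 / (fF ν m μ v 0 ρ - u * q) ^ 2 + v * ρ) ρ :=
  statement8_general ν m β μ u v hm hβ hv lam hlam1 c δ hδ hdec L hL q hq η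

end PB
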